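/- Let 0 < λ < 1, 0 < ω_X ≤ 1, and let γ satisfy 0 ≤ γ ≤ ω_X b(K) − (1−ω_X) c(K). Suppose p_0 ∈ [0,1] satisfies max{ (c(K)+γ)/((1−λ) ω_X (b(K)+c(K))) − λ/(1−λ), 0 } ≤ p_0 ≤ min{ γ/((1−λ) ω_X (b(K)+c(K))), 1 }, and define p(s) := (c(s)+γ)/(λ ω_X (b(K)+c(K))) − ((1−λ)/λ) p_0 for s ∈ [0,K]. Then 0 ≤ p(s) ≤ 1 for all s ∈ [0,K], and the two-point strategy σ_X^0 = p_0 δ_K + (1−p_0) δ_0, σ_X^X[x] = p(x) δ_K + (1−p(x)) δ_0, σ_X^Y[y] = p(y) δ_K + (1−p(y)) δ_0 satisfies, with ψ(s) := b(s) + c(s), both identities b(x) − γ = ψ(x) − λ ω_X ∫ ψ dσ_X^X[x] − (1−λ) ω_X ∫ ψ dσ_X^0 and −c(y) − γ = − λ ω_X ∫ ψ dσ_X^Y[y] − (1−λ) ω_X ∫ ψ dσ_X^0 for all x, y ∈ [0,K]. Consequently, in the randomly-alternating continuous Donation Game, this strategy is an equalizer that unilaterally enforces π_Y = γ. -/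

import Mathlib

/-!
With `ψ = b + c`, which vanishes at `0`, integrating `ψ` against a two-point strategy
`r δ_K + (1 - r) δ_0` gives `r ψ(K)`; for the affine reaction probability `p` both autocratic
identities are then linear identities. They write Y's payoff in a round whose move is `s` as
`γ - (1 - λ) ω_X p₀ ψ(K) + ψ(X's move) - λ ω_X ψ(K) p(s)`. As X only ever plays `0` or `K`, the
expected `ψ` of X's move in round `t` is `ψ(K) m_t`, with `m_t` the probability that X plays `K` in
round `t`, and `m_0 = ω_X p₀`, `m_{t+1} = ω_X 𝔼[p(s_t)]`. So the discounted payoff telescopes to `γ`.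
-/

open MeasureTheory Set

section TwoPoint

variable {α : Type*} [MeasurableSpace α]

noncomputable def twoPoint (p : ℝ) (x y : α) : Measure α :=
  ENNReal.ofReal p • Measure.dirac x + ENNReal.ofReal (1 - p) • Measure.dirac y

theorem integral_twoPoint [MeasurableSingletonClass α] (g : α → ℝ) {p : ℝ} (hp : p ∈ Icc 0 1)
    (x y : α) : ∫ s, g s ∂twoPoint p x y = p * g x + (1 - p) * g y := by
  have hdirac : ∀ z : α, Integrable g (Measure.dirac z) := fun z =>
    (integrable_const (g z)).congr (ae_eq_dirac g).symm
  rw [twoPoint, integral_add_measure ((hdirac x).smul_measure ENNReal.ofReal_ne_top)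
      ((hdirac y).smul_measure ENNReal.ofReal_ne_top),
    integral_smul_measure, integral_smul_measure, integral_dirac, integral_dirac,
    ENNReal.toReal_ofReal hp.1, ENNReal.toReal_ofReal (sub_nonneg.2 hp.2), smul_eq_mul, smul_eq_mul]

theorem twoPoint_apply_of_notMem {E : Set α} (hE : MeasurableSet E) (p : ℝ) {x y : α}
    (hx : x ∉ E) (hy : y ∉ E) : twoPoint p x y E = 0 := by
  simp [twoPoint, Measure.dirac_apply' _ hE, hx, hy]

theorem twoPoint_apply_singleton_left [MeasurableSingletonClass α] (p : ℝ) {x y : α}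
    (hxy : x ≠ y) : twoPoint p x y {x} = ENNReal.ofReal p := by
  simp [twoPoint, hxy.symm]

end TwoPoint

theorem tsum_sub_succ {G : Type*} [AddCommGroup G] [TopologicalSpace G] [IsTopologicalAddGroup G]
    [T2Space G] {f : ℕ → G} (hf : Summable f) : ∑' t, (f t - f (t + 1)) = f 0 := by
  rw [Summable.tsum_sub hf ((summable_nat_add_iff 1).2 hf), hf.tsum_eq_zero_add,
    add_sub_cancel_right]

theorem one_sub_mul_tsum_pow_mul_telescope {lam C Ψ : ℝ} {m : ℕ → ℝ} (hlam0 : 0 ≤ lam)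
    (hlam1 : lam < 1) (hm : Summable fun t => lam ^ t * m t) :
    (1 - lam) * ∑' t, lam ^ t * (C + Ψ * (m t - lam * m (t + 1))) = C + (1 - lam) * Ψ * m 0 := by
  have hgeom := summable_geometric_of_lt_one hlam0 hlam1
  have hsplit : ∀ t, lam ^ t * (C + Ψ * (m t - lam * m (t + 1)))
      = C * lam ^ t + Ψ * (lam ^ t * m t - lam ^ (t + 1) * m (t + 1)) := fun t => by ring
  rw [tsum_congr hsplit, Summable.tsum_add (hgeom.mul_left C)
      ((hm.sub ((summable_nat_add_iff 1).2 hm)).mul_left Ψ), tsum_mul_left, tsum_mul_left,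
    tsum_sub_succ (f := fun t => lam ^ t * m t) hm, tsum_geometric_of_lt_one hlam0 hlam1]
  field_simp [(sub_pos.2 hlam1).ne']

section Game

variable {α : Type*} [MeasurableSpace α]

/-- `ν t` is the law of the move of round `t`: `Sum.inl x` if X plays `x`, `Sum.inr y` if Y plays
`y`. X moves with probability `ω`, by `σ0` in the first round and by `σ s` after the move `s`; only
X's part of `ν` is constrained, so Y's strategy is arbitrary. -/
structure IsMoveDistribution (ω : ℝ) (σ0 : Measure α) (σ : α ⊕ α → Measure α)
    (ν : ℕ → Measure (α ⊕ α)) : Prop where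
  isProbabilityMeasure : ∀ t, IsProbabilityMeasure (ν t)
  inl_image_zero : ∀ E, MeasurableSet E → ν 0 (Sum.inl '' E) = ENNReal.ofReal ω * σ0 E
  inl_image_succ : ∀ t E, MeasurableSet E →
    ν (t + 1) (Sum.inl '' E) = ENNReal.ofReal ω * ∫⁻ s, σ s E ∂ν t

noncomputable def discountedPayoff (lam : ℝ) (u : α ⊕ α → ℝ) (ν : ℕ → Measure (α ⊕ α)) : ℝ :=
  (1 - lam) * ∑' t, lam ^ t * ∫ s, u s ∂ν t

namespace IsMoveDistribution

variable {ω : ℝ} {σ0 : Measure α} {σ : α ⊕ α → Measure α} {ν : ℕ → Measure (α ⊕ α)}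

theorem measure_inl_image_eq_zero (hν : IsMoveDistribution ω σ0 σ ν) {E : Set α}
    (hE : MeasurableSet E) (h0 : σ0 E = 0) (h : ∀ s, σ s E = 0) (t : ℕ) :
    ν t (Sum.inl '' E) = 0 := by
  cases t with
  | zero => rw [hν.inl_image_zero E hE, h0, mul_zero]
  | succ t => simp [hν.inl_image_succ t E hE, h]

variable [MeasurableSingletonClass α] {hi lo : α} {p0 : ℝ} {q : α ⊕ α → ℝ}

theorem measureReal_inl_zero (hν : IsMoveDistribution ω (twoPoint p0 hi lo) σ ν) (hω : 0 ≤ ω)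
    (hp0 : 0 ≤ p0) (hne : hi ≠ lo) : (ν 0).real {Sum.inl hi} = ω * p0 := by
  rw [measureReal_def, ← image_singleton, hν.inl_image_zero _ (measurableSet_singleton hi),
    twoPoint_apply_singleton_left _ hne, ← ENNReal.ofReal_mul hω,
    ENNReal.toReal_ofReal (by positivity)]

theorem measureReal_inl_succ (hν : IsMoveDistribution ω σ0 (fun s => twoPoint (q s) hi lo) ν)
    (hω : 0 ≤ ω) (hq : Measurable q) (hq01 : ∀ s, q s ∈ Icc 0 1) (hne : hi ≠ lo) (t : ℕ) :
    (ν (t + 1)).real {Sum.inl hi} = ω * ∫ s, q s ∂ν t := by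
  have := hν.isProbabilityMeasure t
  have hqint : Integrable q (ν t) := .of_mem_Icc 0 1 hq.aemeasurable (ae_of_all _ hq01)
  have hqnn : 0 ≤ ∫ s, q s ∂ν t := integral_nonneg fun s => (hq01 s).1
  rw [measureReal_def, ← image_singleton, hν.inl_image_succ _ _ (measurableSet_singleton hi)]
  simp_rw [twoPoint_apply_singleton_left _ hne]
  rw [← ofReal_integral_eq_lintegral_ofReal hqint (ae_of_all _ fun s => (hq01 s).1),
    ← ENNReal.ofReal_mul hω, ENNReal.toReal_ofReal (by positivity)]

theorem sumElim_zero_ae_eq_indicator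
    (hν : IsMoveDistribution ω (twoPoint p0 hi lo) (fun s => twoPoint (q s) hi lo) ν)
    {ψ : α → ℝ} (hψ : ψ lo = 0) (t : ℕ) :
    Sum.elim ψ 0 =ᵐ[ν t] ({Sum.inl hi} : Set (α ⊕ α)).indicator fun _ => ψ hi := by
  have hE : MeasurableSet ({hi, lo}ᶜ : Set α) := (Set.toFinite _).measurableSet.compl
  have hnull := hν.measure_inl_image_eq_zero hE (twoPoint_apply_of_notMem hE _ (by simp) (by simp))
    (fun s => twoPoint_apply_of_notMem hE _ (by simp) (by simp)) t
  refine measure_mono_null ?_ hnull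
  rintro (x | y) hs
  · by_cases hx : x = hi
    · simp [hx] at hs
    · refine ⟨x, ?_, rfl⟩
      rintro (rfl | rfl)
      · exact hx rfl
      · simp [hx, hψ] at hs
  · simp at hs

end IsMoveDistribution

variable [MeasurableSingletonClass α]

theorem discountedPayoff_eq_of_autocratic {ω lam γ p0 : ℝ} {hi lo : α} {q : α ⊕ α → ℝ}
    {σ0 : Measure α} {σ : α ⊕ α → Measure α} {ν : ℕ → Measure (α ⊕ α)}
    (hν : IsMoveDistribution ω σ0 σ ν) (hσ0 : σ0 = twoPoint p0 hi lo)
    (hσ : ∀ s, σ s = twoPoint (q s) hi lo) (hne : hi ≠ lo) (hlam0 : 0 ≤ lam) (hlam1 : lam < 1)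
    (hω : 0 ≤ ω) (hp0 : p0 ∈ Icc 0 1) (hq : Measurable q) (hq01 : ∀ s, q s ∈ Icc 0 1)
    {ψ f g : α → ℝ} (hψ : ψ lo = 0)
    (hf : ∀ x, f x - γ = ψ x - lam * ω * (∫ s, ψ s ∂σ (.inl x)) - (1 - lam) * ω * ∫ s, ψ s ∂σ0)
    (hg : ∀ y, g y - γ = -(lam * ω * ∫ s, ψ s ∂σ (.inr y)) - (1 - lam) * ω * ∫ s, ψ s ∂σ0) :
    discountedPayoff lam (Sum.elim f g) ν = γ := by
  subst hσ0
  obtain rfl : σ = fun s => twoPoint (q s) hi lo := funext hσ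
  set m : ℕ → ℝ := fun t => (ν t).real {Sum.inl hi}
  set C := γ - (1 - lam) * ω * (p0 * ψ hi)
  have hint : ∀ r ∈ Icc (0 : ℝ) 1, ∫ s, ψ s ∂twoPoint r hi lo = r * ψ hi := fun r hr => by
    rw [integral_twoPoint ψ hr, hψ, mul_zero, add_zero]
  have hpoint : ∀ s, Sum.elim f g s = C + (Sum.elim ψ 0 s - lam * ω * ψ hi * q s) := by
    rintro (x | y)
    · rw [Sum.elim_inl, Sum.elim_inl]
      linear_combination hf x - lam * ω * hint _ (hq01 _) - (1 - lam) * ω * hint _ hp0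
    · rw [Sum.elim_inr, Sum.elim_inr, Pi.zero_apply]
      linear_combination hg y - lam * ω * hint _ (hq01 _) - (1 - lam) * ω * hint _ hp0
  have hhi : MeasurableSet ({Sum.inl hi} : Set (α ⊕ α)) := by
    rw [← image_singleton]
    exact (measurableSet_singleton hi).inl_image
  have hround : ∀ t, ∫ s, Sum.elim f g s ∂ν t = C + ψ hi * (m t - lam * m (t + 1)) := by
    intro t
    have := hν.isProbabilityMeasure t
    have hae := hν.sumElim_zero_ae_eq_indicator hψ t
    have hφ : Integrable (Sum.elim ψ 0) (ν t) :=
      ((integrable_const _).indicator hhi).congr hae.symm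
    have hqint : Integrable q (ν t) := .of_mem_Icc 0 1 hq.aemeasurable (ae_of_all _ hq01)
    have hrest : Integrable (fun s => Sum.elim ψ 0 s - lam * ω * ψ hi * q s) (ν t) :=
      hφ.sub (hqint.const_mul _)
    rw [integral_congr_ae (ae_of_all _ hpoint), integral_add (integrable_const _) hrest,
      integral_sub hφ (hqint.const_mul _), integral_const_mul, integral_congr_ae hae,
      integral_indicator_const _ hhi]
    simp only [m, hν.measureReal_inl_succ hω hq hq01 hne t, integral_const, probReal_univ,
      smul_eq_mul, one_mul]
    ring
  have hm : Summable fun t => lam ^ t * m t := by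
    refine .of_nonneg_of_le (fun t => by positivity) (fun t => ?_)
      (summable_geometric_of_lt_one hlam0 hlam1)
    have := hν.isProbabilityMeasure t
    exact mul_le_of_le_one_right (by positivity) measureReal_le_one
  rw [discountedPayoff, tsum_congr fun t => congrArg _ (hround t),
    one_sub_mul_tsum_pow_mul_telescope hlam0 hlam1 hm,
    show m 0 = ω * p0 from hν.measureReal_inl_zero hω hp0.1 hne]
  ring

end Game

theorem mul_reactionProb {lam ω Ψ γ p0 c : ℝ} (hlam : lam ≠ 0) (hω : ω ≠ 0) (hΨ : Ψ ≠ 0) :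
    lam * ω * (((c + γ) / (lam * ω * Ψ) - ((1 - lam) / lam) * p0) * Ψ)
      = c + γ - (1 - lam) * ω * (p0 * Ψ) := by
  field_simp

theorem reactionProb_mem_Icc {lam ω Ψ γ p0 c cmax : ℝ} (hlam0 : 0 < lam) (hlam1 : lam < 1)
    (hω : 0 < ω) (hΨ : 0 < Ψ) (hc : c ∈ Icc 0 cmax)
    (hp0lb : (cmax + γ) / ((1 - lam) * ω * Ψ) - lam / (1 - lam) ≤ p0)
    (hp0ub : p0 ≤ γ / ((1 - lam) * ω * Ψ)) :
    (c + γ) / (lam * ω * Ψ) - ((1 - lam) / lam) * p0 ∈ Icc 0 1 := by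
  have hlam : 0 < 1 - lam := sub_pos.2 hlam1
  have hD : 0 < (1 - lam) * ω * Ψ := by positivity
  have hub : (1 - lam) * ω * Ψ * p0 ≤ γ := by rwa [le_div_iff₀' hD] at hp0ub
  have hlb : cmax + γ ≤ lam * ω * Ψ + (1 - lam) * ω * Ψ * p0 := by
    rw [sub_le_iff_le_add, div_le_iff₀ hD] at hp0lb
    refine hp0lb.trans_eq ?_
    field_simp
    ring
  have hform : (c + γ) / (lam * ω * Ψ) - ((1 - lam) / lam) * p0
      = (c + γ - (1 - lam) * ω * Ψ * p0) / (lam * ω * Ψ) := by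
    field_simp
  rw [hform]
  exact ⟨div_nonneg (by linarith [hc.1]) (by positivity),
    (div_le_one (by positivity)).2 (by linarith [hc.2])⟩

theorem stmt_18_general
    (K : ℝ) (hK : 0 < K) (b c : ℝ → ℝ)
    (hcM : MonotoneOn c (Set.Icc 0 K))
    (hb0 : b 0 = 0) (hc0 : c 0 = 0)
    (hcb : ∀ s ∈ Set.Ioc (0 : ℝ) K, c s < b s)
    (lam : ℝ) (hlam0 : 0 < lam) (hlam1 : lam < 1)
    (ωX : ℝ) (hω0 : 0 < ωX)
    (γ : ℝ)
    (p0 : ℝ)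
    (hp0lb : max ((c K + γ) / ((1 - lam) * ωX * (b K + c K))
        - lam / (1 - lam)) 0 ≤ p0)
    (hp0ub : p0 ≤ min (γ / ((1 - lam) * ωX * (b K + c K))) 1)
    (p : Set.Icc (0 : ℝ) K → ℝ)
    (hp : ∀ s : Set.Icc (0 : ℝ) K,
      p s = (c ↑s + γ) / (lam * ωX * (b K + c K)) - ((1 - lam) / lam) * p0)
    (σX0 : Measure (Set.Icc (0 : ℝ) K))
    (hσX0 : σX0 =
      ENNReal.ofReal p0 • Measure.dirac (⟨K, Set.right_mem_Icc.mpr hK.le⟩ : Set.Icc (0 : ℝ) K)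
        + ENNReal.ofReal (1 - p0) • Measure.dirac (⟨0, Set.left_mem_Icc.mpr hK.le⟩ : Set.Icc (0 : ℝ) K))
    (σX : Set.Icc (0 : ℝ) K ⊕ Set.Icc (0 : ℝ) K → Measure (Set.Icc (0 : ℝ) K))
    (hσXs : ∀ s : Set.Icc (0 : ℝ) K ⊕ Set.Icc (0 : ℝ) K, σX s =
      ENNReal.ofReal (p (Sum.elim id id s)) • Measure.dirac (⟨K, Set.right_mem_Icc.mpr hK.le⟩ : Set.Icc (0 : ℝ) K)
        + ENNReal.ofReal (1 - p (Sum.elim id id s)) • Measure.dirac (⟨0, Set.left_mem_Icc.mpr hK.le⟩ : Set.Icc (0 : ℝ) K)) :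
    (∀ s : Set.Icc (0 : ℝ) K, 0 ≤ p s ∧ p s ≤ 1) ∧
    (∀ x : Set.Icc (0 : ℝ) K,
      b ↑x - γ =
        (b ↑x + c ↑x)
          - lam * ωX * (∫ s, (b ↑s + c ↑s) ∂(σX (Sum.inl x)))
          - (1 - lam) * ωX * (∫ s, (b ↑s + c ↑s) ∂σX0)) ∧
    (∀ y : Set.Icc (0 : ℝ) K,
      -(c ↑y) - γ =
        -(lam * ωX * (∫ s, (b ↑s + c ↑s) ∂(σX (Sum.inr y))))
          - (1 - lam) * ωX * (∫ s, (b ↑s + c ↑s) ∂σX0)) ∧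
    (∀ ν : ℕ → Measure (Set.Icc (0 : ℝ) K ⊕ Set.Icc (0 : ℝ) K),
      (∀ t, IsProbabilityMeasure (ν t)) →
      (∀ E : Set (Set.Icc (0 : ℝ) K), MeasurableSet E →
        ν 0 (Sum.inl '' E) = ENNReal.ofReal ωX * σX0 E) →
      (∀ (t : ℕ) (E : Set (Set.Icc (0 : ℝ) K)), MeasurableSet E →
        ν (t + 1) (Sum.inl '' E) = ENNReal.ofReal ωX * ∫⁻ s, σX s E ∂(ν t)) →
      (1 - lam) * ∑' t : ℕ, lam ^ t *
          ∫ s, Sum.elim (fun x : Set.Icc (0 : ℝ) K => b ↑x)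
            (fun y : Set.Icc (0 : ℝ) K => -(c ↑y)) s ∂(ν t) = γ) := by
  set top : Set.Icc (0 : ℝ) K := ⟨K, right_mem_Icc.2 hK.le⟩
  set bot : Set.Icc (0 : ℝ) K := ⟨0, left_mem_Icc.2 hK.le⟩
  have hσX0' : σX0 = twoPoint p0 top bot := hσX0
  have hσX' : ∀ s, σX s = twoPoint (p (Sum.elim id id s)) top bot := hσXs
  have hc_mem : ∀ s : Set.Icc (0 : ℝ) K, c s ∈ Icc 0 (c K) := fun s => by
    simpa [hc0] using hcM.mapsTo_Icc s.2
  have hΨ : 0 < b K + c K := by linarith [hcb K ⟨hK, le_rfl⟩, (hc_mem top).1]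
  have hp0 : p0 ∈ Icc 0 1 := ⟨le_of_max_le_right hp0lb, le_of_le_min_right hp0ub⟩
  have hp_mem : ∀ s, p s ∈ Icc 0 1 := fun s => hp s ▸ reactionProb_mem_Icc hlam0 hlam1 hω0 hΨ
    (hc_mem s) (le_of_max_le_left hp0lb) (le_of_le_min_left hp0ub)
  have hp_mono : Monotone p := fun s t hst => by
    rw [hp, hp]
    gcongr
    exact hcM s.2 t.2 hst
  have hψ : ∀ r ∈ Icc (0 : ℝ) 1, ∫ s, (b s + c s) ∂twoPoint r top bot = r * (b K + c K) :=
    fun r hr => by simp [integral_twoPoint _ hr, top, bot, hb0, hc0]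
  have key : ∀ s, lam * ωX * (p s * (b K + c K))
      = c s + γ - (1 - lam) * ωX * (p0 * (b K + c K)) := fun s =>
    hp s ▸ mul_reactionProb hlam0.ne' hω0.ne' hΨ.ne'
  have hX : ∀ x : Set.Icc (0 : ℝ) K, b x - γ = (b x + c x)
      - lam * ωX * (∫ s, (b s + c s) ∂σX (.inl x)) - (1 - lam) * ωX * (∫ s, (b s + c s) ∂σX0) := by
    intro x
    rw [hσX', hσX0', Sum.elim_inl, id_eq, hψ _ (hp_mem _), hψ _ hp0]
    linear_combination key x
  have hY : ∀ y : Set.Icc (0 : ℝ) K, -c y - γ = -(lam * ωX * (∫ s, (b s + c s) ∂σX (.inr y)))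
      - (1 - lam) * ωX * (∫ s, (b s + c s) ∂σX0) := by
    intro y
    rw [hσX', hσX0', Sum.elim_inr, id_eq, hψ _ (hp_mem _), hψ _ hp0]
    linear_combination key y
  refine ⟨hp_mem, hX, hY, fun ν hprob h0 hrec => ?_⟩
  exact discountedPayoff_eq_of_autocratic (q := fun s => p (Sum.elim id id s)) ⟨hprob, h0, hrec⟩
    hσX0' hσX' (by simp [top, bot, hK.ne']) hlam0.le hlam1 hω0.le hp0
    (hp_mono.measurable.comp (measurable_id.sumElim measurable_id)) (fun s => hp_mem _)
    (by simp [bot, hb0, hc0]) hX hY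

/-- Two-point equalizer strategies in the randomly-alternating continuous
Donation Game: for `0 ≤ γ ≤ ωX b(K) − (1−ωX) c(K)` and suitable initial
cooperation probability `p₀`, the reaction probabilities `p(s)` lie in
`[0,1]`, the two-point strategy `σX0 = p₀ δ_K + (1−p₀) δ_0`,
`σX^X[x] = p(x) δ_K + (1−p(x)) δ_0`, `σX^Y[y] = p(y) δ_K + (1−p(y)) δ_0`
satisfies both autocratic identities with `ψ(s) = b(s) + c(s)`, and
consequently it unilaterally enforces `π_Y = γ` for every strategy of player
`Y`. -/
theorem stmt_18
    (K : ℝ) (hK : 0 < K) (b c : ℝ → ℝ)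
    (hbC : ContinuousOn b (Set.Icc 0 K)) (hcC : ContinuousOn c (Set.Icc 0 K))
    (hbM : MonotoneOn b (Set.Icc 0 K)) (hcM : MonotoneOn c (Set.Icc 0 K))
    (hb0 : b 0 = 0) (hc0 : c 0 = 0)
    (hcb : ∀ s ∈ Set.Ioc (0 : ℝ) K, c s < b s)
    (hcpos : ∀ s ∈ Set.Ioc (0 : ℝ) K, 0 < c s)
    (lam : ℝ) (hlam0 : 0 < lam) (hlam1 : lam < 1)
    (ωX : ℝ) (hω0 : 0 < ωX) (hω1 : ωX ≤ 1)
    (γ : ℝ) (hγ0 : 0 ≤ γ) (hγ1 : γ ≤ ωX * b K - (1 - ωX) * c K)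
    (p0 : ℝ)
    (hp0lb : max ((c K + γ) / ((1 - lam) * ωX * (b K + c K))
        - lam / (1 - lam)) 0 ≤ p0)
    (hp0ub : p0 ≤ min (γ / ((1 - lam) * ωX * (b K + c K))) 1)
    (p : Set.Icc (0 : ℝ) K → ℝ)
    (hp : ∀ s : Set.Icc (0 : ℝ) K,
      p s = (c ↑s + γ) / (lam * ωX * (b K + c K)) - ((1 - lam) / lam) * p0)
    (σX0 : Measure (Set.Icc (0 : ℝ) K))
    (hσX0 : σX0 =
      ENNReal.ofReal p0 • Measure.dirac (⟨K, Set.right_mem_Icc.mpr hK.le⟩ : Set.Icc (0 : ℝ) K)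
        + ENNReal.ofReal (1 - p0) • Measure.dirac (⟨0, Set.left_mem_Icc.mpr hK.le⟩ : Set.Icc (0 : ℝ) K))
    (σX : Set.Icc (0 : ℝ) K ⊕ Set.Icc (0 : ℝ) K → Measure (Set.Icc (0 : ℝ) K))
    (hσXs : ∀ s : Set.Icc (0 : ℝ) K ⊕ Set.Icc (0 : ℝ) K, σX s =
      ENNReal.ofReal (p (Sum.elim id id s)) • Measure.dirac (⟨K, Set.right_mem_Icc.mpr hK.le⟩ : Set.Icc (0 : ℝ) K)
        + ENNReal.ofReal (1 - p (Sum.elim id id s)) • Measure.dirac (⟨0, Set.left_mem_Icc.mpr hK.le⟩ : Set.Icc (0 : ℝ) K)) :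
    (∀ s : Set.Icc (0 : ℝ) K, 0 ≤ p s ∧ p s ≤ 1) ∧
    (∀ x : Set.Icc (0 : ℝ) K,
      b ↑x - γ =
        (b ↑x + c ↑x)
          - lam * ωX * (∫ s, (b ↑s + c ↑s) ∂(σX (Sum.inl x)))
          - (1 - lam) * ωX * (∫ s, (b ↑s + c ↑s) ∂σX0)) ∧
    (∀ y : Set.Icc (0 : ℝ) K,
      -(c ↑y) - γ =
        -(lam * ωX * (∫ s, (b ↑s + c ↑s) ∂(σX (Sum.inr y))))
          - (1 - lam) * ωX * (∫ s, (b ↑s + c ↑s) ∂σX0)) ∧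
    (∀ ν : ℕ → Measure (Set.Icc (0 : ℝ) K ⊕ Set.Icc (0 : ℝ) K),
      (∀ t, IsProbabilityMeasure (ν t)) →
      (∀ E : Set (Set.Icc (0 : ℝ) K), MeasurableSet E →
        ν 0 (Sum.inl '' E) = ENNReal.ofReal ωX * σX0 E) →
      (∀ (t : ℕ) (E : Set (Set.Icc (0 : ℝ) K)), MeasurableSet E →
        ν (t + 1) (Sum.inl '' E) = ENNReal.ofReal ωX * ∫⁻ s, σX s E ∂(ν t)) →
      (1 - lam) * ∑' t : ℕ, lam ^ t *
          ∫ s, Sum.elim (fun x : Set.Icc (0 : ℝ) K => b ↑x)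
            (fun y : Set.Icc (0 : ℝ) K => -(c ↑y)) s ∂(ν t) = γ) :=
  stmt_18_general K hK b c hcM hb0 hc0 hcb lam hlam0 hlam1 ωX hω0 γ p0 hp0lb hp0ub p hp σX0 hσX0 σX
    hσXs
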